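/- For (x₁,x₂,t) and (y₁,y₂,s) with x₁²+x₂² = t², y₁²+y₂² = s², t,s ∈ [0,1], the identity (1/4)(sqrt((t+x₁)(s+y₁)) + sign(x₂ y₂)·sqrt((t−x₁)(s−y₁)))² = (1/2)(ts + x₁y₁ + x₂y₂) holds. -/
import Mathlib


/-- The key algebraic identity on the cone surface: with `sign(u) = 1` if `u ≥ 0` and `−1`
otherwise, if `x₁²+x₂² = t²`, `y₁²+y₂² = s²` and `t, s ∈ [0,1]`, then
`(1/4)(√((t+x₁)(s+y₁)) + sign(x₂y₂)·√((t−x₁)(s−y₁)))² = (1/2)(ts + x₁y₁ + x₂y₂)`. -/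
theorem cone_identity (x₁ x₂ t y₁ y₂ s : ℝ)
    (hx : x₁ ^ 2 + x₂ ^ 2 = t ^ 2) (hy : y₁ ^ 2 + y₂ ^ 2 = s ^ 2)
    (ht : t ∈ Set.Icc (0 : ℝ) 1) (hs : s ∈ Set.Icc (0 : ℝ) 1) :
    (1 / 4) * (Real.sqrt ((t + x₁) * (s + y₁)) +
        (if 0 ≤ x₂ * y₂ then (1 : ℝ) else -1) * Real.sqrt ((t - x₁) * (s - y₁))) ^ 2 =
      (1 / 2) * (t * s + x₁ * y₁ + x₂ * y₂) := by
  obtain ⟨ht0, -⟩ := ht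
  obtain ⟨hs0, -⟩ := hs
  have hxt : |x₁| ≤ t := abs_le_of_sq_le_sq (by nlinarith [sq_nonneg x₂]) ht0
  have hys : |y₁| ≤ s := abs_le_of_sq_le_sq (by nlinarith [sq_nonneg y₂]) hs0
  obtain ⟨hx1, hx2⟩ := abs_le.mp hxt
  obtain ⟨hy1, hy2⟩ := abs_le.mp hys
  have hA : (0:ℝ) ≤ (t + x₁) * (s + y₁) := mul_nonneg (by linarith) (by linarith)
  have hB : (0:ℝ) ≤ (t - x₁) * (s - y₁) := mul_nonneg (by linarith) (by linarith)
  have hAB : Real.sqrt ((t + x₁) * (s + y₁)) * Real.sqrt ((t - x₁) * (s - y₁))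
      = |x₂ * y₂| := by
    rw [← Real.sqrt_mul hA]
    have : (t + x₁) * (s + y₁) * ((t - x₁) * (s - y₁)) = (x₂ * y₂) ^ 2 := by nlinarith
    rw [this, Real.sqrt_sq_eq_abs]
  have hA' := Real.sq_sqrt hA
  have hB' := Real.sq_sqrt hB
  split_ifs with h
  · rw [abs_of_nonneg h] at hAB
    nlinarith [hAB, hA', hB']
  · rw [abs_of_neg (lt_of_not_ge h)] at hAB
    nlinarith [hAB, hA', hB']
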